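/- arXiv:math/0501110 — 3 statements merged into one kernel-verified Lean document; each statement's English description precedes it below -/
import Mathlib

section
/- Let v₁, v₂, v₃, v₄ be pairwise distinct vectors in ℝ² each of Euclidean norm 1 with v₁ + v₂ + v₃ + v₄ = 0. Then there exist a rotation R of ℝ² (an element of the special orthogonal group SO(2)), a real number α with 0 < α ≤ π/4, and a permutation σ of {1,2,3,4} such that R v_{σ(1)} = (cos α, sin α), R v_{σ(2)} = (cos α, -sin α), R v_{σ(3)} = -(cos α, sin α), and R v_{σ(4)} = -(cos α, -sin α). -/
/-!
Identify the plane with `ℂ`. For unit complex numbers with zero sum, `(a + b)(a + c)(a + d) = 0`,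
so the four vectors are two antipodal pairs `±x, ±y` with `y ≠ ±x`. Relabelling within
`{±x, ±y}` moves `x * conj y` into the quadrant `re ≥ 0, im > 0`, so
`α := arg (x * conj y) / 2 ∈ (0, π/4]`, and multiplication by `exp (α * I) * conj x`, a rotation,
sends `x` to `exp (α * I)` and `y` to `exp (-α * I)`.
-/

open Real Complex ComplexConjugate

namespace Complex

theorem add_mul_add_mul_add_eq_zero_of_sum_eq_zero {a b c d : ℂ} (ha : ‖a‖ = 1) (hb : ‖b‖ = 1)
    (hc : ‖c‖ = 1) (hd : ‖d‖ = 1) (h : a + b + c + d = 0) :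
    (a + b) * (a + c) * (a + d) = 0 := by
  have hconj : conj a + conj b + conj c + conj d = 0 := by simpa using congrArg conj h
  have unit {z : ℂ} (hz : ‖z‖ = 1) : z * conj z = 1 := by simp [mul_conj', hz]
  -- `(a + b)(a + c)(a + d) = a² (a + b + c + d) + e₃`, and on the unit circle
  -- `e₃ = abcd (a⁻¹ + b⁻¹ + c⁻¹ + d⁻¹) = abcd · conj (a + b + c + d)`.
  linear_combination a ^ 2 * h + a * b * c * d * hconj - b * c * d * unit ha
    - a * c * d * unit hb - a * b * d * unit hc - a * b * c * unit hd

theorem exists_perm_antipodal {v : Fin 4 → ℂ} (hv : ∀ i, ‖v i‖ = 1)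
    (hsum : v 0 + v 1 + v 2 + v 3 = 0) :
    ∃ τ : Equiv.Perm (Fin 4), v (τ 2) = -v (τ 0) ∧ v (τ 3) = -v (τ 1) := by
  have h := add_mul_add_mul_add_eq_zero_of_sum_eq_zero (hv 0) (hv 1) (hv 2) (hv 3) hsum
  rw [mul_eq_zero, mul_eq_zero] at h
  obtain (h01 | h02) | h03 := h
  · refine ⟨Equiv.swap 1 2, ?_, ?_⟩ <;> simp [Equiv.swap_apply_of_ne_of_ne] <;>
      [linear_combination h01; linear_combination hsum - h01]
  · refine ⟨1, ?_, ?_⟩ <;> simp only [Equiv.Perm.one_apply] <;>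
      [linear_combination h02; linear_combination hsum - h02]
  · refine ⟨Equiv.swap 2 3, ?_, ?_⟩ <;> simp [Equiv.swap_apply_of_ne_of_ne] <;>
      [linear_combination h03; linear_combination hsum - h03]

theorem im_mul_conj_ne_zero {x y : ℂ} (hx : ‖x‖ = 1) (hy : ‖y‖ = 1) (hne : x ≠ y)
    (hne' : x ≠ -y) : (x * conj y).im ≠ 0 := by
  intro him
  set q := x * conj y
  have hq : (q.re : ℂ) = q := ext rfl (by simp [him])
  have hxq : x = q.re * y := by rw [hq, mul_assoc, conj_mul', hy]; simp
  have hre : |q.re| = 1 := by rw [abs_re_eq_norm.2 him, norm_mul, norm_conj, hx, hy, one_mul]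
  rcases abs_eq (zero_le_one' ℝ) |>.1 hre with h | h <;>
    [exact hne (by simpa [h] using hxq); exact hne' (by simpa [h] using hxq)]

theorem exists_perm_antipodal_im_pos_re_nonneg {w : Fin 4 → ℂ} (hw : ∀ i, ‖w i‖ = 1)
    (h2 : w 2 = -w 0) (h3 : w 3 = -w 1) (hne : w 0 ≠ w 1) (hne' : w 0 ≠ -w 1) :
    ∃ σ : Equiv.Perm (Fin 4), w (σ 2) = -w (σ 0) ∧ w (σ 3) = -w (σ 1) ∧
      0 < (w (σ 0) * conj (w (σ 1))).im ∧ 0 ≤ (w (σ 0) * conj (w (σ 1))).re := by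
  have him := im_mul_conj_ne_zero (hw 0) (hw 1) hne hne'
  rcases him.lt_or_gt with him | him <;> rcases le_or_gt 0 (w 0 * conj (w 1)).re with hre | hre
  all_goals simp only [mul_im, mul_re, conj_re, conj_im] at him hre
  · refine ⟨Equiv.swap 0 1 * Equiv.swap 2 3, ?_, ?_, ?_, ?_⟩ <;>
      simp [Equiv.swap_apply_of_ne_of_ne, h2, h3] <;> linarith
  · refine ⟨Equiv.swap 1 3, ?_, ?_, ?_, ?_⟩ <;>
      simp [Equiv.swap_apply_of_ne_of_ne, h2, h3] <;> linarith
  · refine ⟨1, h2, h3, ?_, ?_⟩ <;> simp <;> linarith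
  · refine ⟨finRotate 4, ?_, ?_, ?_, ?_⟩ <;> simp [h2, h3] <;> linarith

theorem arg_mem_Ioc_zero_pi_div_two {z : ℂ} (him : 0 < z.im) (hre : 0 ≤ z.re) :
    arg z ∈ Set.Ioc 0 (π / 2) :=
  ⟨(arg_nonneg_iff.2 him.le).lt_of_ne' fun h => him.ne' (arg_eq_zero_iff.1 h).2,
    arg_le_pi_div_two_iff.2 (.inl hre)⟩

theorem exists_perm_antipodal_arg_mem_Ioc {v : Fin 4 → ℂ} (hv : ∀ i, ‖v i‖ = 1)
    (hinj : Function.Injective v) (hsum : v 0 + v 1 + v 2 + v 3 = 0) :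
    ∃ σ : Equiv.Perm (Fin 4), v (σ 2) = -v (σ 0) ∧ v (σ 3) = -v (σ 1) ∧
      arg (v (σ 0) * conj (v (σ 1))) ∈ Set.Ioc 0 (π / 2) := by
  obtain ⟨τ, h2, h3⟩ := exists_perm_antipodal hv hsum
  have hne : v (τ 0) ≠ v (τ 1) := hinj.ne (τ.injective.ne (by decide))
  have hne' : v (τ 0) ≠ -v (τ 1) := h3 ▸ hinj.ne (τ.injective.ne (by decide))
  obtain ⟨σ, h2', h3', him, hre⟩ :=
    exists_perm_antipodal_im_pos_re_nonneg (w := v ∘ τ) (fun i => hv _) h2 h3 hne hne'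
  exact ⟨σ.trans τ, h2', h3', arg_mem_Ioc_zero_pi_div_two him hre⟩

theorem exists_mul_eq_exp_half_arg_mul_conj {x y : ℂ} (hx : ‖x‖ = 1) (hy : ‖y‖ = 1) :
    ∃ w : ℂ, ‖w‖ = 1 ∧ w * x = exp (↑(arg (x * conj y) / 2) * I) ∧
      w * y = exp (↑(-(arg (x * conj y) / 2)) * I) := by
  set θ := arg (x * conj y)
  have hq : x * conj y = exp (θ * I) := by
    simpa [hx, hy] using (norm_mul_exp_arg_mul_I (x * conj y)).symm
  refine ⟨exp (↑(θ / 2) * I) * conj x,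
    by rw [norm_mul, norm_exp_ofReal_mul_I, norm_conj, hx, one_mul], ?_, ?_⟩
  · rw [mul_assoc, conj_mul', hx]; simp
  · have hy' : conj x * y = conj (exp (θ * I)) := by rw [← hq]; simp [mul_comm]
    rw [mul_assoc, hy', ← exp_conj, ← exp_add]
    congr 1; rw [map_mul, conj_ofReal, conj_I]; push_cast; ring

def rotationMatrix (w : ℂ) : Matrix (Fin 2) (Fin 2) ℝ := !![w.re, -w.im; w.im, w.re]

theorem rotationMatrix_mem_specialOrthogonalGroup {w : ℂ} (hw : ‖w‖ = 1) :
    w.rotationMatrix ∈ Matrix.specialOrthogonalGroup (Fin 2) ℝ := by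
  rw [rotationMatrix, Matrix.of_mem_specialOrthogonalGroup_fin_two_iff]
  refine ⟨rfl, rfl, ?_⟩
  rw [neg_sq, sq, sq, ← normSq_apply, normSq_eq_norm_sq, hw, one_pow]

theorem toEuclideanLin_rotationMatrix (w z : ℂ) :
    Matrix.toEuclideanLin w.rotationMatrix (orthonormalBasisOneI.repr z) =
      orthonormalBasisOneI.repr (w * z) := by
  ext i
  fin_cases i <;> simp [rotationMatrix, Matrix.mulVec, dotProduct, Fin.sum_univ_two] <;> ring

theorem orthonormalBasisOneI_repr_exp_mul_I (α : ℝ) :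
    orthonormalBasisOneI.repr (exp (α * I)) =
      (WithLp.equiv 2 (Fin 2 → ℝ)).symm ![Real.cos α, Real.sin α] := by
  ext i; fin_cases i <;> simp [exp_ofReal_mul_I_re, exp_ofReal_mul_I_im]

end Complex

/-- Four pairwise distinct unit vectors in the Euclidean plane summing to zero can,
after a rotation `R ∈ SO(2)` and a permutation, be put in the normal form
`(cos α, sin α), (cos α, -sin α), -(cos α, sin α), -(cos α, -sin α)` with
`α ∈ (0, π/4]`. -/
theorem four_unit_vectors_normal_form
    (v : Fin 4 → EuclideanSpace ℝ (Fin 2))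
    (hinj : Function.Injective v)
    (hnorm : ∀ i, ‖v i‖ = 1)
    (hsum : v 0 + v 1 + v 2 + v 3 = 0) :
    ∃ (R : Matrix.specialOrthogonalGroup (Fin 2) ℝ) (α : ℝ) (σ : Equiv.Perm (Fin 4)),
      0 < α ∧ α ≤ π / 4 ∧
      Matrix.toEuclideanLin (R : Matrix (Fin 2) (Fin 2) ℝ) (v (σ 0)) =
        (WithLp.equiv 2 (Fin 2 → ℝ)).symm ![Real.cos α, Real.sin α] ∧
      Matrix.toEuclideanLin (R : Matrix (Fin 2) (Fin 2) ℝ) (v (σ 1)) =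
        (WithLp.equiv 2 (Fin 2 → ℝ)).symm ![Real.cos α, -Real.sin α] ∧
      Matrix.toEuclideanLin (R : Matrix (Fin 2) (Fin 2) ℝ) (v (σ 2)) =
        -((WithLp.equiv 2 (Fin 2 → ℝ)).symm ![Real.cos α, Real.sin α]) ∧
      Matrix.toEuclideanLin (R : Matrix (Fin 2) (Fin 2) ℝ) (v (σ 3)) =
        -((WithLp.equiv 2 (Fin 2 → ℝ)).symm ![Real.cos α, -Real.sin α]) := by
  set z := fun i => orthonormalBasisOneI.repr.symm (v i)
  have hv (i : Fin 4) : v i = orthonormalBasisOneI.repr (z i) :=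
    (LinearIsometryEquiv.apply_symm_apply _ _).symm
  have hz (i : Fin 4) : ‖z i‖ = 1 := (LinearIsometryEquiv.norm_map _ _).trans (hnorm i)
  obtain ⟨σ, h2, h3, hα⟩ := exists_perm_antipodal_arg_mem_Ioc hz
    (orthonormalBasisOneI.repr.symm.injective.comp hinj)
    (by simp only [z, ← map_add, hsum, map_zero])
  obtain ⟨w, hw, hx, hy⟩ := exists_mul_eq_exp_half_arg_mul_conj (hz (σ 0)) (hz (σ 1))
  refine ⟨⟨w.rotationMatrix, rotationMatrix_mem_specialOrthogonalGroup hw⟩, arg (z (σ 0) * conj (z (σ 1))) / 2, σ,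
    by linarith [hα.1], by linarith [hα.2], ?_, ?_, ?_, ?_⟩ <;>
  simp only [hv, h2, h3, toEuclideanLin_rotationMatrix, map_neg, hx, hy,
    orthonormalBasisOneI_repr_exp_mul_I, Real.cos_neg, Real.sin_neg]
end

section
/- Let n ≥ 2 and M ≥ 0 be integers. Let D = { c : Fin n → ℝ | c₀ = 0, cᵢ < cⱼ whenever i < j, and c_{n-1} < 1 }, a convex subset of ℝⁿ. Define G_M : D → ℝ by G_M(c) = Σ_{0 ≤ i < j ≤ n-1} Σ_{k=-M}^{M} log |cᵢ - cⱼ - k| (all arguments of the logarithm are nonzero on D). Then G_M is strictly concave on D. -/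
/-!
For `i < j` the difference `cᵢ - cⱼ` of an ordered configuration lies in `(-1, 0)`, an interval
containing no integer, so each `u ↦ log |u - k|` is strictly concave there. Composed with the
linear map `c ↦ cᵢ - cⱼ`, every summand of the energy is concave on the convex domain. Because
`c₀ = 0` is fixed, two distinct configurations differ at some `cⱼ` with `j > 0`, and along
their segment the summand `log |c₀ - cⱼ|` is strictly concave.
-/

open Set Real

theorem strictConcaveOn_sum_of_exists_lt {ι E : Type*} [AddCommMonoid E] [Module ℝ E]
    {s : Finset ι} {D : Set E} {f : ι → E → ℝ} (hD : Convex ℝ D)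
    (hf : ∀ i ∈ s, ConcaveOn ℝ D (f i))
    (hlt : ∀ x ∈ D, ∀ y ∈ D, x ≠ y → ∀ ⦃a b : ℝ⦄, 0 < a → 0 < b → a + b = 1 →
      ∃ i ∈ s, a • f i x + b • f i y < f i (a • x + b • y)) :
    StrictConcaveOn ℝ D fun x => ∑ i ∈ s, f i x := by
  refine ⟨hD, fun x hx y hy hxy a b ha hb hab => ?_⟩
  rw [Finset.smul_sum, Finset.smul_sum, ← Finset.sum_add_distrib]
  exact Finset.sum_lt_sum (fun i hi => (hf i hi).2 hx hy ha.le hb.le hab)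
    (hlt x hx y hy hxy ha hb hab)

theorem strictConcaveOn_log_sub_Iio (k : ℝ) : StrictConcaveOn ℝ (Iio k) fun u => log (u - k) := by
  have h := strictConcaveOn_log_Iio.translate_left (-k)
  rw [show (fun z => -k + z) ⁻¹' Iio 0 = Iio k by ext; simp] at h
  simpa only [Function.comp_def, sub_eq_add_neg] using h

theorem strictConcaveOn_log_sub_Ioi (k : ℝ) : StrictConcaveOn ℝ (Ioi k) fun u => log (u - k) := by
  have h := strictConcaveOn_log_Ioi.translate_left (-k)
  rw [show (fun z => -k + z) ⁻¹' Ioi 0 = Ioi k by ext; simp] at h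
  simpa only [Function.comp_def, sub_eq_add_neg] using h

theorem strictConcaveOn_log_sub_intCast (k : ℤ) :
    StrictConcaveOn ℝ (Ioo (-1) 0) fun u => log (u - k) := by
  rcases le_or_gt 0 k with hk | hk
  · refine (strictConcaveOn_log_sub_Iio k).subset (fun u hu => ?_) (convex_Ioo _ _)
    exact hu.2.trans_le (by exact_mod_cast hk)
  · refine (strictConcaveOn_log_sub_Ioi k).subset (fun u hu => ?_) (convex_Ioo _ _)
    have : (k : ℝ) ≤ -1 := by exact_mod_cast Int.le_sub_one_of_lt hk
    exact this.trans_lt hu.1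

theorem convex_setOf_strictMono {ι : Type*} [Preorder ι] :
    Convex ℝ {c : ι → ℝ | StrictMono c} := by
  intro x hx y hy a b ha hb hab i j hij
  have := convex_Ioi (0 : ℝ) (sub_pos.2 (hx hij)) (sub_pos.2 (hy hij)) ha hb hab
  simp only [mem_Ioi, smul_eq_mul, Pi.add_apply, Pi.smul_apply] at this ⊢
  linarith

theorem smul_add_smul_apply_sub_apply {ι : Type*} (x y : ι → ℝ) (i j : ι) (a b : ℝ) :
    (a • x + b • y) i - (a • x + b • y) j = a * (x i - x j) + b * (y i - y j) := by
  simp only [Pi.add_apply, Pi.smul_apply, smul_eq_mul]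
  ring

section OrderedConfigs

variable {ι : Type*} [PartialOrder ι] {p q i j : ι}

def orderedConfigs (p q : ι) : Set (ι → ℝ) :=
  {c | c p = 0 ∧ (∀ i j : ι, i < j → c i < c j) ∧ c q < 1}

theorem convex_orderedConfigs (p q : ι) : Convex ℝ (orderedConfigs p q) :=
  (convex_hyperplane (LinearMap.proj p).isLinear 0).inter <|
    (convex_setOf_strictMono (ι := ι)).inter (convex_halfSpace_lt (LinearMap.proj q).isLinear 1)

theorem sub_mem_Ioo_of_mem_orderedConfigs {c : ι → ℝ} (hc : c ∈ orderedConfigs p q)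
    (hpi : p ≤ i) (hjq : j ≤ q) (hij : i < j) : c i - c j ∈ Ioo (-1) 0 := by
  obtain ⟨hp, hmono, hq⟩ := hc
  have hci : c p ≤ c i := StrictMono.monotone (fun _ _ => hmono _ _) hpi
  have hcj : c j ≤ c q := StrictMono.monotone (fun _ _ => hmono _ _) hjq
  constructor <;> linarith [hmono i j hij]

theorem concaveOn_log_abs_sub_sub_intCast (hpi : p ≤ i) (hjq : j ≤ q) (hij : i < j) (k : ℤ) :
    ConcaveOn ℝ (orderedConfigs p q) fun c => log |c i - c j - k| := by
  refine ⟨convex_orderedConfigs p q, fun x hx y hy a b ha hb hab => ?_⟩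
  have := (strictConcaveOn_log_sub_intCast k).concaveOn.2
    (sub_mem_Ioo_of_mem_orderedConfigs hx hpi hjq hij)
    (sub_mem_Ioo_of_mem_orderedConfigs hy hpi hjq hij) ha hb hab
  simpa only [smul_add_smul_apply_sub_apply x y i j, log_abs, smul_eq_mul] using this

theorem smul_log_abs_add_smul_log_abs_lt (hpi : p ≤ i) (hjq : j ≤ q) (hij : i < j) (k : ℤ)
    {x y : ι → ℝ} (hx : x ∈ orderedConfigs p q) (hy : y ∈ orderedConfigs p q)
    (hxy : x i - x j ≠ y i - y j) {a b : ℝ} (ha : 0 < a) (hb : 0 < b) (hab : a + b = 1) :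
    a • log |x i - x j - k| + b • log |y i - y j - k|
      < log |(a • x + b • y) i - (a • x + b • y) j - k| := by
  have := (strictConcaveOn_log_sub_intCast k).2
    (sub_mem_Ioo_of_mem_orderedConfigs hx hpi hjq hij)
    (sub_mem_Ioo_of_mem_orderedConfigs hy hpi hjq hij) hxy ha hb hab
  simpa only [smul_add_smul_apply_sub_apply x y i j, log_abs, smul_eq_mul] using this

end OrderedConfigs

/-- The truncated logarithmic interaction energy
`G_M(c) = ∑_{i<j} ∑_{k=-M}^{M} log |cᵢ - cⱼ - k|` is strictly concave on the
simplex `D = {c : c₀ = 0, c increasing, c_{n-1} < 1}`. -/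
theorem truncated_energy_strictConcaveOn
    (n : ℕ) (hn : 2 ≤ n) (M : ℕ) :
    StrictConcaveOn ℝ
      {c : Fin n → ℝ | c ⟨0, by omega⟩ = 0 ∧
        (∀ i j : Fin n, i < j → c i < c j) ∧ c ⟨n - 1, by omega⟩ < 1}
      (fun c : Fin n → ℝ =>
        ∑ i : Fin n, ∑ j : Fin n,
          if i < j then
            ∑ k ∈ Finset.Icc (-(M : ℤ)) (M : ℤ), Real.log |c i - c j - (k : ℝ)|
          else 0) := by
  set p : Fin n := ⟨0, by omega⟩
  set q : Fin n := ⟨n - 1, by omega⟩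
  have hp (i : Fin n) : p ≤ i := Fin.le_def.2 (Nat.zero_le _)
  have hq (j : Fin n) : j ≤ q := Fin.le_def.2 (Nat.le_sub_one_of_lt j.isLt)
  change StrictConcaveOn ℝ (orderedConfigs p q) _
  simp only [Finset.ite_sum_zero, ← Finset.sum_product']
  refine strictConcaveOn_sum_of_exists_lt (convex_orderedConfigs p q) (fun t _ => ?_)
    fun x hx y hy hxy a b ha hb hab => ?_
  · split_ifs with h
    · exact concaveOn_log_abs_sub_sub_intCast (hp _) (hq _) h _
    · exact concaveOn_const _ (convex_orderedConfigs p q)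
  obtain ⟨j, hj⟩ := Function.ne_iff.1 hxy
  have hpj : p < j := (hp j).lt_of_ne fun h => hj (h ▸ hx.1.trans hy.1.symm)
  refine ⟨(p, j, 0), by simp, ?_⟩
  simp only [if_pos hpj]
  exact smul_log_abs_add_smul_log_abs_lt (hp p) (hq j) hpj 0 hx hy
    (by simpa [hx.1, hy.1]) ha hb hab
end

section
/- Let n ≥ 1 be an integer and let c*ⱼ = j/n for j = 0, 1, …, n-1 be the equally spaced configuration. Then for every index j ∈ {0, …, n-1}, the symmetric truncated forces tend to zero: the sequence M ↦ Σ_{k=-M}^{M} Σ_{j'=0}^{n-1, (k,j') ≠ (0,j)} 1/(c*ⱼ - c*_{j'} - k) converges to 0 as M → ∞. -/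
/-!
Writing `c*ⱼ - c*ⱼ' - k = (j - j' - n k) / n`, the map `(k, j') ↦ j - j' - n k` is a bijection
from `[-M, M] × {0, …, n-1}` onto the integer interval `[j - nM - (n-1), j + nM]`, so the truncated
force is `n ∑ 1/t` over that interval, the excluded node `(0, j)` becoming `t = 0`, whose term
`0⁻¹` is `0`. The terms with `|t| ≤ nM` cancel in pairs `t, -t`, and the `n - 1` remaining ones
are at most `1/(nM + 1)` each.
-/

open Finset Filter

theorem sum_Icc_neg_self_intCast_inv_eq_zero {K : Type*} [DivisionRing K] (L : ℤ) :
    ∑ t ∈ Icc (-L) L, (t : K)⁻¹ = 0 := by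
  refine sum_involution (fun t _ => -t) (fun t _ => by push_cast; rw [inv_neg, add_neg_cancel])
    (fun t _ ht h => ?_) (fun t ht => ?_) (fun t _ => neg_neg t)
  · obtain rfl : t = 0 := by omega
    simp at ht
  · simp only [mem_Icc] at ht ⊢
    omega

theorem abs_sum_Icc_intCast_inv_le {K : Type*} [Field K] [LinearOrder K] [IsStrictOrderedRing K]
    {a b L : ℤ} (hL : 0 ≤ L) (ha : a ≤ -L) (hb : L ≤ b) :
    |∑ t ∈ Icc a b, (t : K)⁻¹| ≤ (b - a - 2 * L) / (L + 1) := by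
  have hsub : Icc (-L) L ⊆ Icc a b := Icc_subset_Icc ha hb
  have hcard : ((#(Icc a b \ Icc (-L) L) : ℤ) : K) = b - a - 2 * L := by
    rw [card_sdiff_of_subset hsub, Nat.cast_sub (card_le_card hsub), Int.card_Icc, Int.card_Icc,
      Int.toNat_of_nonneg (by omega), Int.toNat_of_nonneg (by omega)]
    push_cast
    ring
  have hterm : ∀ t ∈ Icc a b \ Icc (-L) L, |(t : K)⁻¹| ≤ ((L : K) + 1)⁻¹ := by
    intro t ht
    simp only [Finset.mem_sdiff, mem_Icc] at ht
    have hLt : (L : K) + 1 ≤ |(t : K)| := by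
      rw [← Int.cast_abs]
      exact_mod_cast (le_abs'.mpr (by omega) : L + 1 ≤ |t|)
    rw [abs_inv]
    exact inv_anti₀ (by positivity) hLt
  rw [← sum_sdiff hsub, sum_Icc_neg_self_intCast_inv_eq_zero, add_zero, div_eq_mul_inv]
  calc |∑ t ∈ Icc a b \ Icc (-L) L, (t : K)⁻¹|
      ≤ ∑ t ∈ Icc a b \ Icc (-L) L, |(t : K)⁻¹| := abs_sum_le_sum_abs _ _
    _ ≤ #(Icc a b \ Icc (-L) L) • ((L : K) + 1)⁻¹ := sum_le_card_nsmul _ _ _ hterm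
    _ = (b - a - 2 * L) * ((L : K) + 1)⁻¹ := by
      rw [nsmul_eq_mul, ← hcard]
      push_cast
      rfl

theorem sum_Icc_sum_fin_sub_mul_add {M : Type*} [AddCommMonoid M] (f : ℤ → M) (n : ℕ)
    [NeZero n] (c a b : ℤ) :
    ∑ k ∈ Icc a b, ∑ r : Fin n, f (c - (k * n + r)) =
      ∑ t ∈ Icc (c - (b * n + (n - 1))) (c - a * n), f t := by
  rw [← sum_product']
  refine sum_equiv ((Int.divModEquiv n).symm.trans (Equiv.subLeft c)) (fun ⟨k, r⟩ => ?_)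
    (fun _ _ => rfl)
  have hr : (r : ℤ) < n := by exact_mod_cast r.isLt
  have hn : (0 : ℤ) < n := by exact_mod_cast Nat.pos_of_neZero n
  simp only [mem_product, mem_Icc, mem_univ, and_true, Equiv.trans_apply,
    Int.divModEquiv_symm_apply, Equiv.subLeft_apply]
  constructor
  · rintro ⟨hak, hkb⟩
    constructor <;> nlinarith
  · rintro ⟨h1, h2⟩
    constructor <;> by_contra! h <;> nlinarith

theorem inv_div_sub_div_sub {K : Type*} [Field K] {n : K} (hn : n ≠ 0) (x y z : K) :
    (x / n - y / n - z)⁻¹ = n * (x - (z * n + y))⁻¹ := by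
  rw [show x / n - y / n - z = (x - (z * n + y)) / n by field_simp; ring, inv_div, div_eq_mul_inv]

/-- The force `𝓕^M_{0,j}(c)` on the node `(0, j)`, where `c_{k,j'} = c j' + k`. -/
noncomputable def truncatedForce {n : ℕ} (c : Fin n → ℝ) (j : Fin n) (M : ℕ) : ℝ :=
  ∑ k ∈ Icc (-(M : ℤ)) M, ∑ j' : Fin n, if k = 0 ∧ j' = j then 0 else (c j - c j' - k)⁻¹

noncomputable def equallySpaced (n : ℕ) (j : Fin n) : ℝ := (j : ℝ) / n

section EquallySpaced

variable {n : ℕ} [NeZero n] (j : Fin n)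

theorem truncatedForce_equallySpaced (M : ℕ) :
    truncatedForce (equallySpaced n) j M =
      n * ∑ t ∈ Icc ((j : ℤ) - (M * n + (n - 1))) (j - -(M : ℤ) * n), (t : ℝ)⁻¹ := by
  rw [mul_sum, ← sum_Icc_sum_fin_sub_mul_add (fun t : ℤ => (n : ℝ) * (t : ℝ)⁻¹)]
  refine sum_congr rfl fun k _ => sum_congr rfl fun j' _ => ?_
  split_ifs with h
  · obtain ⟨rfl, rfl⟩ := h
    simp
  · push_cast
    exact inv_div_sub_div_sub (NeZero.ne _) _ _ _

theorem abs_truncatedForce_equallySpaced_le (M : ℕ) :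
    |truncatedForce (equallySpaced n) j M| ≤ n * ((n - 1) / (M * n + 1)) := by
  have hj : (j : ℤ) < n := by exact_mod_cast j.isLt
  rw [truncatedForce_equallySpaced, abs_mul, Nat.abs_cast]
  gcongr
  convert abs_sum_Icc_intCast_inv_le (K := ℝ) (L := M * n) (by positivity) _ _ using 1
  · push_cast
    ring
  · linarith
  · linarith [Int.natCast_nonneg (j : ℕ)]

theorem tendsto_truncatedForce_equallySpaced :
    Tendsto (truncatedForce (equallySpaced n) j) atTop (nhds 0) := by
  have hn : (0 : ℝ) < n := by exact_mod_cast Nat.pos_of_neZero n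
  have hden : Tendsto (fun M : ℕ => (M : ℝ) * n + 1) atTop atTop :=
    tendsto_atTop_add_const_right _ _ (tendsto_natCast_atTop_atTop.atTop_mul_const hn)
  refine squeeze_zero_norm (abs_truncatedForce_equallySpaced_le j) ?_
  simpa using (tendsto_const_nhds.div_atTop hden).const_mul (n : ℝ)

end EquallySpaced

/-- For the equally spaced configuration `c*ⱼ = j/n`, the symmetrically truncated
forces `∑_{|k| ≤ M} ∑_{j', (k,j') ≠ (0,j)} 1/(c*ⱼ - c*_{j'} - k)` tend to zero as
`M → ∞`. -/
theorem equally_spaced_forces_tendsto_zero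
    (n : ℕ) (hn : 1 ≤ n) (j : Fin n) :
    Filter.Tendsto
      (fun M : ℕ =>
        ∑ k ∈ Finset.Icc (-(M : ℤ)) (M : ℤ), ∑ j' : Fin n,
          if k = 0 ∧ j' = j then 0
          else ((j.val : ℝ) / n - (j'.val : ℝ) / n - (k : ℝ))⁻¹)
      Filter.atTop (nhds 0) := by
  have : NeZero n := ⟨by omega⟩
  exact tendsto_truncatedForce_equallySpaced j
end
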